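/- For n ≥ 2 set D_n = 1 + Σ_{j=1}^{n−2} C(n,j)·X_{n−j}, where C(n,j) is the binomial coefficient. Then D_n/X_n → √e − 1 as n → ∞. -/

import Mathlib

/-- The sequence `X_n` counting equivalence classes of circular planar electrical networks:
`X_1 = 1` and, for `n ≥ 2`,
`X_n = 2(n-1) X_{n-1} + ∑_{j=2}^{n-2} (j-1) X_j X_{n-j}` (the sum being empty for `n ≤ 3`;
here it is written over the attached index set to establish termination). -/
def X : ℕ → ℕ
  | 0 => 1
  | 1 => 1
  | n + 2 =>
      2 * (n + 1) * X (n + 1) +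
        ∑ j ∈ (Finset.Icc 2 n).attach, (j.1 - 1) * X j.1 * X (n + 2 - j.1)
decreasing_by
  · exact Nat.lt_succ_self (n + 1)
  · have := j.2; rw [Finset.mem_Icc] at this; omega
  · have := j.2; rw [Finset.mem_Icc] at this; omega

/-- `D_n = 1 + ∑_{j=1}^{n-2} C(n,j)·X_{n-j}`, counting certain non-full wiring diagrams. -/
def D (n : ℕ) : ℕ := 1 + ∑ j ∈ Finset.Icc 1 (n - 2), n.choose j * X (n - j)

/-
Put `vₙ = Xₙ / (2ⁿ n!)`. The recurrence gives `Xₙ₊₁ ≥ 2n Xₙ`, i.e. `n vₙ` is nondecreasing. In the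
normalised recurrence `vₙ₊₂ = (n+1)/(n+2) vₙ₊₁ + ∑ (i+1) vᵢ₊₂ vₙ₋ᵢ / C(n+2, i+2)` the convolution
sum is at most `vₙ₊₁ / (n+2)` as soon as `v` is nonincreasing up to `n + 1`, using only
`v₂ = 1/4`, `v₃ = 1/6`, the monotonicity of `k v_k` and `∑_{j=3}^{M-3} 1/C(M,j) ≤ 3/(M(M-1))`;
by strong induction `v` is nonincreasing, i.e. `Xₙ₊₁ ≤ 2(n+1) Xₙ`.

Hence `C(n,j) Xₙ₋ⱼ / Xₙ = (vₙ₋ⱼ / vₙ) 2⁻ʲ / j!` with `1 ≤ vₙ₋ⱼ / vₙ ≤ n / (n-j)`: each term tends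
to `2⁻ʲ / j!` and is dominated by `2^{1-j} / (j-1)!`, so by Tannery's theorem
`Dₙ / Xₙ → ∑_{j ≥ 1} 2⁻ʲ / j! = √e - 1`.
-/

open Finset Filter Topology
open scoped Nat

lemma X_succ_succ (n : ℕ) :
    X (n + 2) = 2 * (n + 1) * X (n + 1) +
      ∑ i ∈ range (n - 1), (i + 1) * X (i + 2) * X (n - i) := by
  rw [X, sum_attach (Icc 2 n) (fun j => (j - 1) * X j * X (n + 2 - j)),
    ← Ico_add_one_right_eq_Icc, sum_Ico_eq_sum_range]
  refine congrArg _ (sum_congr (by congr 1) fun i _ => ?_)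
  rw [show 2 + i - 1 = i + 1 by omega, show n + 2 - (2 + i) = n - i by omega, add_comm 2 i]

lemma X_one : X 1 = 1 := by rw [X]
lemma X_two : X 2 = 2 := by rw [X_succ_succ]; simp [X_one]
lemma X_three : X 3 = 8 := by rw [X_succ_succ]; simp [X_two]

lemma two_mul_mul_X_le (n : ℕ) : 2 * n * X n ≤ X (n + 1) := by
  rcases n with _ | n
  · simp
  · rw [X_succ_succ]; omega

lemma X_pos : ∀ n, 0 < X n
  | 0 => by rw [X]; omega
  | 1 => by rw [X_one]; omega
  | n + 2 => (Nat.mul_pos (by omega) (X_pos (n + 1))).trans_le (two_mul_mul_X_le (n + 1))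

lemma self_le_X (n : ℕ) : n ≤ X n := by
  induction n with
  | zero => omega
  | succ n ih =>
    rcases n with _ | n
    · rw [X_one]
    · have := two_mul_mul_X_le (n + 1); nlinarith

noncomputable def normX (n : ℕ) : ℝ := X n / (2 ^ n * n !)

lemma normX_pos (n : ℕ) : 0 < normX n := by
  have := X_pos n
  unfold normX; positivity

lemma normX_two : normX 2 = 1 / 4 := by norm_num [normX, X_two]
lemma normX_three : normX 3 = 1 / 6 := by norm_num [normX, X_three, Nat.factorial]

lemma monotone_mul_normX : Monotone fun n : ℕ => n * normX n := by
  refine monotone_nat_of_le_succ fun n => ?_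
  have h : (2 * n * X n : ℝ) ≤ X (n + 1) := by exact_mod_cast two_mul_mul_X_le n
  simp only [normX, Nat.factorial_succ, pow_succ]
  push_cast
  rw [mul_div_assoc', mul_div_assoc', div_le_div_iff₀ (by positivity) (by positivity)]
  nlinarith [mul_le_mul_of_nonneg_right h (by positivity : (0:ℝ) ≤ 2 ^ n * n ! * (n + 1))]

lemma X_mul_X_div (j m : ℕ) :
    (X j * X m : ℝ) / (2 ^ (j + m) * (j + m)!) = normX j * normX m / (j + m).choose j := by
  have h := Nat.add_choose_mul_factorial_mul_factorial m j
  rw [add_comm m j] at h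
  rw [normX, normX, ← h, pow_add]
  push_cast
  have : ((j + m).choose j : ℝ) ≠ 0 := by exact_mod_cast (Nat.choose_pos (by omega)).ne'
  field_simp

lemma normX_succ_succ (n : ℕ) :
    normX (n + 2) = (n + 1) / (n + 2) * normX (n + 1) +
      ∑ i ∈ range (n - 1), (i + 1) * normX (i + 2) * normX (n - i) / (n + 2).choose (i + 2) := by
  rw [normX, X_succ_succ]
  push_cast
  rw [add_div, sum_div]
  congr 1
  · rw [normX, Nat.factorial_succ, pow_succ]; push_cast; field_simp; ring
  · refine sum_congr rfl fun i hi => ?_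
    have hi : i + 2 + (n - i) = n + 2 := by simp at hi; omega
    rw [← hi, mul_assoc, mul_div_assoc, X_mul_X_div]
    ring

lemma Nat.choose_le_choose_of_le_of_le_sub {n r k : ℕ} (hrk : r ≤ k) (hkn : k ≤ n - r) :
    n.choose r ≤ n.choose k := by
  wlog hk : k ≤ n / 2 generalizing k
  · rw [← Nat.choose_symm (show k ≤ n by omega)]
    exact this (by omega) (by omega) (by omega)
  induction k, hrk using Nat.le_induction with
  | base => rfl
  | succ k hrk ih =>
    exact (ih (by omega) (by omega)).trans (Nat.choose_le_succ_of_lt_half_left (by omega))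

lemma sum_range_inv_choose_le (m : ℕ) :
    ∑ i ∈ range m, ((m + 5).choose (i + 3) : ℝ)⁻¹ ≤ 3 / ((m + 5) * (m + 4)) := by
  rcases m with _ | _ | k
  · simp only [range_zero, sum_empty]; positivity
  · norm_num [Nat.choose]
  · rw [sum_range_succ, sum_range_succ']
    have hmid : ∀ i ∈ range k,
        ((k + 2 + 5).choose (i + 1 + 3) : ℝ)⁻¹ ≤ ((k + 7).choose 4 : ℝ)⁻¹ := by
      intro i hi
      simp only [mem_range] at hi
      gcongr
      · exact_mod_cast Nat.choose_pos (by omega)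
      · exact Nat.choose_le_choose_of_le_of_le_sub (by omega) (by omega)
    have hsymm : (k + 2 + 5).choose (k + 1 + 3) = (k + 7).choose 3 := by
      rw [show k + 1 + 3 = k + 7 - 3 by omega, Nat.choose_symm (by omega)]
    have h3 : ((k + 7).choose 3 : ℝ) = (k + 7) * (k + 6) * (k + 5) / 6 := by
      rw [Nat.cast_choose ℝ (by omega : 3 ≤ k + 7), show k + 7 - 3 = k + 4 by omega]
      push_cast [Nat.factorial_succ]; field_simp; ring
    have h4 : ((k + 7).choose 4 : ℝ) = (k + 7) * (k + 6) * (k + 5) * (k + 4) / 24 := by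
      rw [Nat.cast_choose ℝ (by omega : 4 ≤ k + 7), show k + 7 - 4 = k + 3 by omega]
      push_cast [Nat.factorial_succ]; field_simp; ring
    calc _ ≤ ∑ i ∈ range k, ((k + 7).choose 4 : ℝ)⁻¹ + ((k + 7).choose 3 : ℝ)⁻¹
          + ((k + 7).choose 3 : ℝ)⁻¹ := by
          rw [hsymm]; gcongr ?_ + _ + _; exact sum_le_sum hmid
      _ ≤ 3 / ((↑(k + 2) + 5) * (↑(k + 2) + 4)) := by
          rw [sum_const, card_range, nsmul_eq_mul, h3, h4]
          push_cast
          field_simp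
          have hk : (0 : ℝ) ≤ (k + 7) * (k + 6) * ((k - 3 / 2) ^ 2 + 7 / 4) := by positivity
          nlinarith [hk]

/- The end terms `i = 0` and `i = n - 2` together contribute `n v₂ vₙ / C(n+2, 2)`; every other
term is bounded through `v (n - i) ≤ 1/6` and `(i+1) v (i+2) ≤ (n+1) v (n+1)`, which leaves
`∑_{j=3}^{n-1} 1 / C(n+2, j)`. -/
lemma convolution_sum_le (v : ℕ → ℝ) (n : ℕ) (hv : ∀ k, 0 ≤ v k) (h2 : v 2 ≤ 1 / 4)
    (h3 : ∀ k, 3 ≤ k → k ≤ n → v k ≤ 1 / 6)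
    (hmul : ∀ k ≤ n + 1, k * v k ≤ (n + 1) * v (n + 1)) :
    ∑ i ∈ range (n - 1), (i + 1) * v (i + 2) * v (n - i) / (n + 2).choose (i + 2)
      ≤ v (n + 1) / (n + 2) := by
  have hpos : 0 ≤ v (n + 1) / (n + 2) := by have := hv (n + 1); positivity
  rcases lt_or_ge n 3 with hn | hn
  · interval_cases n
    · simpa using hpos
    · simpa using hpos
    · have := hmul 2 (by omega)
      norm_num [Nat.choose] at this ⊢
      nlinarith [mul_le_mul_of_nonneg_left h2 (hv 2)]
  obtain ⟨m, rfl⟩ : ∃ m, n = m + 3 := ⟨n - 3, by omega⟩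
  set w := v (m + 4)
  have hends : v 2 * v (m + 3) / (m + 5).choose 2
      + (m + 2) * v (m + 3) * v 2 / (m + 5).choose (m + 3) ≤ w / (2 * (m + 5)) := by
    have hmul' := hmul (m + 3) (by omega)
    have hc : ((m + 5).choose 2 : ℝ) = (m + 5) * (m + 4) / 2 := by
      rw [Nat.cast_choose_two]; push_cast; ring
    push_cast at hmul'
    have := hv (m + 3)
    calc _ = (m + 3) * v (m + 3) * v 2 * 2 / ((m + 5) * (m + 4)) := by
          rw [Nat.choose_symm_of_eq_add (show m + 5 = m + 3 + 2 by omega), hc]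
          field_simp; ring
      _ ≤ (m + 4) * w * (1 / 4) * 2 / ((m + 5) * (m + 4)) := by
          have := hv 2
          gcongr ?_ * ?_ * _ / _
          · exact mul_nonneg (by positivity) (hv _)
          · linarith
      _ = w / (2 * (m + 5)) := by field_simp; ring
  have hmid : ∑ i ∈ range m, (i + 2) * v (i + 3) * v (m + 2 - i) / (m + 5).choose (i + 3)
      ≤ w / (2 * (m + 5)) := by
    calc _ ≤ ∑ i ∈ range m, (m + 4) * w / 6 * ((m + 5).choose (i + 3) : ℝ)⁻¹ := by
          refine sum_le_sum fun i hi => ?_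
          simp only [mem_range] at hi
          have hj := hmul (i + 3) (by omega)
          have hk := h3 (m + 2 - i) (by omega) (by omega)
          push_cast at hj
          rw [div_eq_mul_inv]
          gcongr ?_ * _
          have hw : 0 ≤ (m + 4) * w := by have := hv (m + 4); positivity
          have hj' : (i + 2) * v (i + 3) ≤ (m + 4) * w := by linarith [hv (i + 3)]
          nlinarith [mul_le_mul_of_nonneg_right hj' (hv (m + 2 - i)),
            mul_le_mul_of_nonneg_left hk hw]
      _ ≤ (m + 4) * w / 6 * (3 / ((m + 5) * (m + 4))) := by
          rw [← mul_sum]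
          gcongr
          · have := hv (m + 4); positivity
          · exact_mod_cast sum_range_inv_choose_le m
      _ = w / (2 * (m + 5)) := by field_simp; ring
  rw [show m + 3 - 1 = m + 1 + 1 by omega, sum_range_succ, sum_range_succ']
  have e : ∀ k, m + 3 - (k + 1) = m + 2 - k := fun k => by omega
  simp only [e, add_assoc, Nat.reduceAdd, zero_add, Nat.sub_zero, Nat.add_sub_cancel_left,
    Nat.cast_add, Nat.cast_one, Nat.cast_zero, Nat.cast_ofNat, one_add_one_eq_two, one_mul]
  have hhalf : w / (m + (3 + 2)) = w / (2 * (m + 5)) + w / (2 * (m + 5)) := by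
    field_simp; ring
  linarith

lemma normX_succ_le (n : ℕ) : normX (n + 1) ≤ normX n := by
  induction n using Nat.strong_induction_on with
  | _ n ih =>
  rcases n with _ | n
  · norm_num [normX, X_one, X]
  have h3 : ∀ k, 3 ≤ k → k ≤ n → normX k ≤ 1 / 6 := by
    intro k hk hkn
    induction k, hk using Nat.le_induction with
    | base => exact normX_three.le
    | succ k hk ihk => exact (ih k (by omega)).trans (ihk (by omega))
  have hsum := convolution_sum_le normX n (fun k => (normX_pos k).le) normX_two.le h3
    (fun k hk => by exact_mod_cast monotone_mul_normX hk)
  have hsplit : normX (n + 1) = (n + 1) / (n + 2) * normX (n + 1) + normX (n + 1) / (n + 2) := by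
    field_simp; ring
  show normX (n + 2) ≤ normX (n + 1)
  rw [normX_succ_succ]
  linarith

lemma normX_antitone : Antitone normX := antitone_nat_of_succ_le normX_succ_le

lemma choose_mul_X_div_X {n j : ℕ} (hj : j ≤ n) :
    (n.choose j * X (n - j) : ℝ) / X n = normX (n - j) / normX n * ((1 / 2) ^ j / j !) := by
  obtain ⟨m, rfl⟩ : ∃ m, n = m + j := ⟨n - j, by omega⟩
  have := X_pos (m + j)
  rw [Nat.add_sub_cancel, normX, normX, ← Nat.choose_symm_add, Nat.cast_add_choose, pow_add,
    one_div_pow]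
  field_simp

lemma tendsto_normX_sub_div (j : ℕ) : Tendsto (fun n => normX (n - j) / normX n) atTop (𝓝 1) := by
  rw [← tendsto_add_atTop_iff_nat j]
  simp only [Nat.add_sub_cancel]
  have hup : Tendsto (fun n : ℕ => 1 + (j : ℝ) / n) atTop (𝓝 1) := by
    simpa using tendsto_const_nhds.add (tendsto_const_div_atTop_nhds_zero_nat (j : ℝ))
  refine tendsto_of_tendsto_of_tendsto_of_le_of_le' tendsto_const_nhds hup
    (Eventually.of_forall fun n => ?_) ((eventually_gt_atTop 0).mono fun n hn => ?_)
  · exact (one_le_div (normX_pos _)).2 (normX_antitone (Nat.le_add_right n j))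
  · have hmul : (n : ℝ) * normX n ≤ (n + j : ℕ) * normX (n + j) :=
      monotone_mul_normX (Nat.le_add_right n j)
    have hn : (0 : ℝ) < n := by exact_mod_cast hn
    have := normX_pos (n + j)
    push_cast at hmul
    rw [div_le_iff₀ (normX_pos _), one_add_div hn.ne', div_mul_eq_mul_div, le_div_iff₀ hn]
    linarith

lemma normX_sub_div_le_two_mul {n j : ℕ} (hj : 1 ≤ j) (hjn : j + 2 ≤ n) :
    normX (n - j) / normX n ≤ 2 * j := by
  have hmul : ((n - j : ℕ) : ℝ) * normX (n - j) ≤ n * normX n := monotone_mul_normX (Nat.sub_le n j)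
  have hn : (n : ℝ) ≤ 2 * j * (n - j : ℕ) := by
    have : n ≤ 2 * j * (n - j) := by
      obtain ⟨m, rfl⟩ : ∃ m, n = m + j + 2 := ⟨n - j - 2, by omega⟩
      rw [show m + j + 2 - j = m + 2 by omega]; nlinarith
    exact_mod_cast this
  have hpos : (0 : ℝ) < n := by exact_mod_cast (show 0 < n by omega)
  rw [div_le_iff₀ (normX_pos n)]
  refine le_of_mul_le_mul_left ?_ hpos
  nlinarith [mul_le_mul_of_nonneg_right hn (normX_pos (n - j)).le,
    mul_le_mul_of_nonneg_left hmul (by positivity : (0 : ℝ) ≤ 2 * j)]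

noncomputable def dTerm (n i : ℕ) : ℝ :=
  if i + 3 ≤ n then (n.choose (i + 1) * X (n - (i + 1)) : ℝ) / X n else 0

lemma D_div_X_eq (n : ℕ) : (D n : ℝ) / X n = (X n : ℝ)⁻¹ + ∑' i, dTerm n i := by
  rw [tsum_eq_sum (s := range (n - 2)) fun i hi => by rw [dTerm, if_neg (by simp at hi; omega)], D,
    ← Ico_add_one_right_eq_Icc, sum_Ico_eq_sum_range]
  push_cast
  rw [add_div, one_div, sum_div]
  refine congrArg _ (sum_congr rfl fun i hi => ?_)
  rw [dTerm, if_pos (by simp at hi; omega), add_comm 1 i]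

lemma tendsto_dTerm (i : ℕ) :
    Tendsto (fun n => dTerm n i) atTop (𝓝 ((1 / 2) ^ (i + 1) / (i + 1)!)) := by
  have h := (tendsto_normX_sub_div (i + 1)).mul_const ((1 / 2 : ℝ) ^ (i + 1) / (i + 1)!)
  rw [one_mul] at h
  refine h.congr' ((eventually_ge_atTop (i + 3)).mono fun n hn => ?_)
  dsimp only
  rw [dTerm, if_pos hn, choose_mul_X_div_X (by omega)]

lemma norm_dTerm_le (n i : ℕ) : ‖dTerm n i‖ ≤ (1 / 2) ^ i / i ! := by
  unfold dTerm
  split_ifs with hn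
  · rw [Real.norm_of_nonneg (by positivity), choose_mul_X_div_X (by omega)]
    calc _ ≤ 2 * (i + 1 : ℕ) * ((1 / 2 : ℝ) ^ (i + 1) / (i + 1)!) := by
          gcongr; exact normX_sub_div_le_two_mul (by omega) (by omega)
      _ = (1 / 2) ^ i / i ! := by
          rw [Nat.factorial_succ]; push_cast; field_simp; ring
  · rw [norm_zero]; positivity

lemma hasSum_half_pow_succ_div_factorial :
    HasSum (fun i : ℕ => (1 / 2 : ℝ) ^ (i + 1) / (i + 1)!) (√(Real.exp 1) - 1) := by
  have h := NormedSpace.expSeries_div_hasSum_exp (1 / 2 : ℝ)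
  rw [← Real.exp_eq_exp_ℝ, ← hasSum_nat_add_iff' 1] at h
  rw [← Real.exp_half]
  simpa using h

lemma tendsto_X_inv : Tendsto (fun n => (X n : ℝ)⁻¹) atTop (𝓝 0) :=
  (tendsto_atTop_mono (fun n => by exact_mod_cast self_le_X n)
    tendsto_natCast_atTop_atTop).inv_tendsto_atTop

/-- `D_n / X_n → √e - 1` as `n → ∞`. -/
theorem D_div_X_tendsto :
    Filter.Tendsto (fun n : ℕ => (D n : ℝ) / (X n : ℝ)) Filter.atTop
      (nhds (Real.sqrt (Real.exp 1) - 1)) := by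
  have h := tendsto_X_inv.add (tendsto_tsum_of_dominated_convergence
    (Real.summable_pow_div_factorial (1 / 2)) tendsto_dTerm
    (Eventually.of_forall fun n => norm_dTerm_le n))
  rw [zero_add, hasSum_half_pow_succ_div_factorial.tsum_eq] at h
  simpa only [D_div_X_eq] using h
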